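/- Let R be a commutative ring, ι a finite index type, and (M k) a family of R-modules indexed by k : ι. Let f, g : (k : ι) → (M k →ₗ[R] M k) and fix i₀ : ι. Suppose (f k) ∘ (g k) = (g k) ∘ (f k) for every k ≠ i₀, while (f i₀) ∘ (g i₀) = −((g i₀) ∘ (f i₀)). Then the induced endomorphisms F = PiTensorProduct.map f and G = PiTensorProduct.map g of ⨂[R] k, M k anticommute: F ∘ G = −(G ∘ F). -/

import Mathlib

open scoped TensorProduct

/-! `PiTensorProduct.map` is multilinear in the family of maps and multiplicative, so sitewise
relations `f k ∘ g k = c k • (g k ∘ f k)` multiply to `map f ∘ map g = (∏ k, c k) • (map g ∘ map f)`.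
Anticommuting at exactly one site makes the product of the signs `-1`. -/

namespace PiTensorProduct

variable {R : Type*} [CommRing R] {ι : Type*} [Fintype ι]
  {s t : ι → Type*} [∀ k, AddCommGroup (s k)] [∀ k, Module R (s k)]
  [∀ k, AddCommGroup (t k)] [∀ k, Module R (t k)]

theorem map_smul_univ (c : ι → R) (φ : (k : ι) → (s k →ₗ[R] t k)) :
    map (fun k ↦ c k • φ k) = (∏ k, c k) • map φ :=
  (mapMultilinear R s t).map_smul_univ c φ

theorem map_comp_eq_prod_smul_map_comp (f g : (k : ι) → (s k →ₗ[R] s k)) (c : ι → R)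
    (h : ∀ k, f k ∘ₗ g k = c k • (g k ∘ₗ f k)) :
    map f ∘ₗ map g = (∏ k, c k) • (map g ∘ₗ map f) := by
  rw [← map_comp, ← map_comp, funext h, map_smul_univ]

end PiTensorProduct

/-- if two families of local operators commute sitewise except at one site `i₀`,
where they anticommute, then the induced endomorphisms of the tensor product anticommute. -/
theorem piTensor_maps_anticommute {R : Type*} [CommRing R] {ι : Type*} [Fintype ι]
    (M : ι → Type*) [∀ k, AddCommGroup (M k)] [∀ k, Module R (M k)]
    (f g : (k : ι) → (M k →ₗ[R] M k)) (i₀ : ι)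
    (hcomm : ∀ k, k ≠ i₀ → f k ∘ₗ g k = g k ∘ₗ f k)
    (hanti : f i₀ ∘ₗ g i₀ = -(g i₀ ∘ₗ f i₀)) :
    PiTensorProduct.map f ∘ₗ PiTensorProduct.map g =
      -(PiTensorProduct.map g ∘ₗ PiTensorProduct.map f) := by
  classical
  let sign : ι → R := Function.update 1 i₀ (-1)
  have hsign : ∀ k, f k ∘ₗ g k = sign k • (g k ∘ₗ f k) := by
    intro k
    by_cases hk : k = i₀
    · subst hk
      simp [sign, hanti]
    · simp [sign, hk, hcomm k hk]
  have hprod : ∏ k, sign k = -1 := by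
    simp [sign, Finset.prod_update_of_mem]
  rw [PiTensorProduct.map_comp_eq_prod_smul_map_comp f g sign hsign, hprod]
  exact neg_one_smul R (PiTensorProduct.map g ∘ₗ PiTensorProduct.map f)
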